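/- Let N ≥ 1, let p ≥ 2, let ν ∈ ℝᴺ∖{0}, and let Y, M ∈ 𝕊(N) with −Y ≤ M. Then −F_p(ν, Y) ≥ |ν|^{p−2}·(λ_N(Y) − (N + p − 3)·λ_N(M)). -/

import Mathlib

open Matrix

/-- The Loewner partial order on matrices: `X ≤ Y` iff `Y - X` is positive semidefinite. -/
def Loewner {n : Type*} [Fintype n] (X Y : Matrix n n ℝ) : Prop := (Y - X).PosSemidef

/-- The eigenvalues of a real symmetric matrix, listed in increasing order. -/
noncomputable def eigs {N : ℕ} (X : Matrix (Fin N) (Fin N) ℝ) : Fin N → ℝ :=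
  if h : X.IsHermitian then h.eigenvalues ∘ Tuple.sort h.eigenvalues else 0

/-- The smallest eigenvalue of a real symmetric matrix. -/
noncomputable def lam1 {N : ℕ} (X : Matrix (Fin N) (Fin N) ℝ) : ℝ := ⨅ i, eigs X i

/-- The largest eigenvalue of a real symmetric matrix. -/
noncomputable def lamN {N : ℕ} (X : Matrix (Fin N) (Fin N) ℝ) : ℝ := ⨆ i, eigs X i

/-- The p-Laplace function
`F_p(ν, X) = −|ν|^{p−2} (tr X + (p−2) ⟨Xν, ν⟩ / |ν|²)`. -/
noncomputable def Fp {N : ℕ} (p : ℝ) (ν : EuclideanSpace ℝ (Fin N))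
    (X : Matrix (Fin N) (Fin N) ℝ) : ℝ :=
  -(‖ν‖ ^ (p - 2)) * (X.trace +
    (p - 2) * (X.mulVec ((WithLp.equiv 2 (Fin N → ℝ)) ν) ⬝ᵥ (WithLp.equiv 2 (Fin N → ℝ)) ν)
      / ‖ν‖ ^ (2 : ℕ))

/-!
Since `−Y ≤ M ≤ λ_N(M) I`, we have `Y ≥ −λ_N(M) I`: every eigenvalue of `Y`, and the Rayleigh
quotient `⟨Yν, ν⟩ / |ν|²`, is at least `−λ_N(M)`. Summing eigenvalues,
`tr Y ≥ λ_N(Y) − (N − 1) λ_N(M)`, and adding `p − 2 ≥ 0` times the Rayleigh bound gives the claim.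
-/

open scoped MatrixOrder

namespace Matrix

variable {n : Type*} [Fintype n] [DecidableEq n] {A : Matrix n n ℝ} {c : ℝ}

lemma IsHermitian.le_eigenvalues_of_algebraMap_le (hA : A.IsHermitian)
    (h : algebraMap ℝ _ c ≤ A) (i : n) : c ≤ hA.eigenvalues i :=
  (algebraMap_le_iff_le_spectrum hA.isSelfAdjoint).mp h _
    (hA.spectrum_real_eq_range_eigenvalues ▸ Set.mem_range_self i)

lemma mul_dotProduct_self_le_of_algebraMap_le (h : algebraMap ℝ _ c ≤ A) (x : n → ℝ) :
    c * (x ⬝ᵥ x) ≤ x ⬝ᵥ A *ᵥ x := by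
  have := (le_iff.mp h).dotProduct_mulVec_nonneg x
  rw [star_trivial, sub_mulVec, dotProduct_sub, Algebra.algebraMap_eq_smul_one, smul_mulVec,
    one_mulVec, dotProduct_smul, smul_eq_mul] at this
  linarith

lemma IsHermitian.le_algebraMap_of_eigenvalues_le (hA : A.IsHermitian)
    (h : ∀ i, hA.eigenvalues i ≤ c) : A ≤ algebraMap ℝ _ c :=
  le_algebraMap_of_spectrum_le (by simpa [hA.spectrum_real_eq_range_eigenvalues]) hA.isSelfAdjoint

lemma IsHermitian.eigenvalue_add_mul_le_trace (hA : A.IsHermitian)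
    (h : ∀ i, c ≤ hA.eigenvalues i) (j : n) :
    hA.eigenvalues j + ((Fintype.card n : ℝ) - 1) * c ≤ A.trace := by
  have hrest : ((Fintype.card n : ℝ) - 1) * c ≤ ∑ i ∈ Finset.univ.erase j, hA.eigenvalues i := by
    have := Finset.card_nsmul_le_sum (Finset.univ.erase j) _ c fun i _ ↦ h i
    rwa [Finset.card_erase_of_mem (Finset.mem_univ j), nsmul_eq_mul, Finset.card_univ,
      Nat.cast_sub (Fintype.card_pos_iff.mpr ⟨j⟩), Nat.cast_one] at this
  rw [hA.trace_eq_sum_eigenvalues, ← Finset.add_sum_erase _ _ (Finset.mem_univ j)]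
  simp only [RCLike.ofReal_real_eq_id, id]
  linarith

end Matrix

section LargestEigenvalue

variable {N : ℕ} {A : Matrix (Fin N) (Fin N) ℝ}

lemma lamN_eq_ciSup_eigenvalues (hA : A.IsHermitian) : lamN A = ⨆ i, hA.eigenvalues i := by
  rw [lamN, eigs, dif_pos hA]
  exact (Tuple.sort hA.eigenvalues).iSup_comp

lemma eigenvalues_le_lamN (hA : A.IsHermitian) (i : Fin N) : hA.eigenvalues i ≤ lamN A :=
  lamN_eq_ciSup_eigenvalues hA ▸ le_ciSup (Set.finite_range _).bddAbove i

lemma exists_eigenvalues_eq_lamN [NeZero N] (hA : A.IsHermitian) :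
    ∃ i, hA.eigenvalues i = lamN A :=
  lamN_eq_ciSup_eigenvalues hA ▸ exists_eq_ciSup_of_finite

lemma le_algebraMap_lamN (hA : A.IsHermitian) : A ≤ algebraMap ℝ _ (lamN A) :=
  hA.le_algebraMap_of_eigenvalues_le (eigenvalues_le_lamN hA)

lemma algebraMap_neg_lamN_le {Y : Matrix (Fin N) (Fin N) ℝ} (hA : A.IsHermitian)
    (h : Loewner (-Y) A) : algebraMap ℝ _ (-lamN A) ≤ Y := by
  rw [map_neg, neg_le]
  exact le_trans (le_iff.mpr h) (le_algebraMap_lamN hA)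

end LargestEigenvalue

lemma EuclideanSpace.ofLp_dotProduct_self {n : Type*} [Fintype n] (x : EuclideanSpace ℝ n) :
    x.ofLp ⬝ᵥ x.ofLp = ‖x‖ ^ 2 := by
  rw [EuclideanSpace.real_norm_sq_eq, dotProduct]
  simp [sq]

/-- Supersolution bound for the p-Laplacian, case `p ≥ 2`:
if `−Y ≤ M` then `−F_p(ν, Y) ≥ |ν|^{p−2} (λ_N(Y) − (N + p − 3) λ_N(M))`. -/
theorem pLaplace_classM_super_p_ge_two {N : ℕ} (hN : 1 ≤ N) (p : ℝ) (hp : 2 ≤ p)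
    (ν : EuclideanSpace ℝ (Fin N)) (hν : ν ≠ 0)
    (Y M : Matrix (Fin N) (Fin N) ℝ) (hY : Y.IsHermitian) (hM : M.IsHermitian)
    (hYM : Loewner (-Y) M) :
    -Fp p ν Y ≥ ‖ν‖ ^ (p - 2) * (lamN Y - ((N : ℝ) + p - 3) * lamN M) := by
  have : NeZero N := ⟨by omega⟩
  have hYlow := algebraMap_neg_lamN_le hM hYM
  obtain ⟨j, hj⟩ := exists_eigenvalues_eq_lamN hY
  have htrace : lamN Y - ((N : ℝ) - 1) * lamN M ≤ Y.trace := by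
    have := hY.eigenvalue_add_mul_le_trace (hY.le_eigenvalues_of_algebraMap_le hYlow) j
    rw [hj, Fintype.card_fin] at this
    linarith
  set w := WithLp.equiv 2 (Fin N → ℝ) ν
  have hν2 : 0 < ‖ν‖ ^ 2 := by positivity
  have hquad : -lamN M ≤ (Y *ᵥ w) ⬝ᵥ w / ‖ν‖ ^ 2 := by
    have := mul_dotProduct_self_le_of_algebraMap_le hYlow w
    rw [EuclideanSpace.ofLp_dotProduct_self, dotProduct_comm] at this
    rwa [le_div_iff₀ hν2]
  rw [Fp, neg_mul, neg_neg, mul_div_assoc, ge_iff_le]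
  gcongr
  have := mul_le_mul_of_nonneg_left hquad (sub_nonneg.mpr hp)
  linarith
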